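/- Let b, σ : ℝ → ℝ be Lipschitz, K⁰ continuous nondecreasing with K⁰(0)=0, and N > 0. Suppose (φₙ) ⊂ L²([0,T],ℝ) satisfies ∫₀ᵀ|φₙ|² ≤ N for all n and φₙ converges weakly in L² to φ. Then the solutions Yⁿ of the skeleton equation with control φₙ converge uniformly on [0,T] to the solution Y with control φ. -/

import Mathlib

/-!
Both Yⁿ and Y solve the skeleton equation, so K⁰ and ξ cancel in Yⁿ − Y, which solves the
equation linearised around Y with the forcing term Fₙ(t) = ∫₀ᵗ σ(Y)φₙ − ∫₀ᵗ σ(Y)φ.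
Cauchy–Schwarz, the Lipschitz bounds and ∫φₙ² ≤ N give
(Yⁿ − Y)²(t) ≤ 3 ‖Fₙ‖²_∞ + C ∫₀ᵗ (Yⁿ − Y)², so by Grönwall ‖Yⁿ − Y‖_∞ ≤ D ‖Fₙ‖_∞ with D
independent of n. Testing the weak convergence against σ(Y)·1_{[0,t]} gives Fₙ(t) → 0 for each
t, and the L² bound makes the maps t ↦ ∫₀ᵗ σ(Y)φₙ uniformly ½-Hölder; an equicontinuous
sequence converging pointwise converges uniformly on the compact [0, T].
-/

open MeasureTheory Set Filter Topology Real
open scoped InnerProductSpace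

theorem sq_integral_mul_le {α : Type*} [MeasurableSpace α] {μ : Measure α} {f g : α → ℝ}
    (hf : MemLp f 2 μ) (hg : MemLp g 2 μ) :
    (∫ a, f a * g a ∂μ) ^ 2 ≤ (∫ a, f a ^ 2 ∂μ) * ∫ a, g a ^ 2 ∂μ := by
  have inner_toLp : ∀ {u v : α → ℝ} (hu : MemLp u 2 μ) (hv : MemLp v 2 μ),
      ⟪hu.toLp, hv.toLp⟫_ℝ = ∫ a, u a * v a ∂μ := fun hu hv => by
    rw [L2.inner_def]
    refine integral_congr_ae ?_
    filter_upwards [hu.coeFn_toLp, hv.coeFn_toLp] with a hua hva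
    simp [hua, hva, mul_comm]
  have := real_inner_mul_inner_self_le hf.toLp hg.toLp
  simpa only [inner_toLp, ← sq] using this

theorem sq_intervalIntegral_mul_le {a b : ℝ} {f g : ℝ → ℝ} (hab : a ≤ b)
    (hf : MemLp f 2 (volume.restrict (Icc a b))) (hg : MemLp g 2 (volume.restrict (Icc a b))) :
    (∫ x in a..b, f x * g x) ^ 2 ≤ (∫ x in a..b, f x ^ 2) * ∫ x in a..b, g x ^ 2 := by
  have hle : volume.restrict (Ioc a b) ≤ volume.restrict (Icc a b) :=
    Measure.restrict_mono Ioc_subset_Icc_self le_rfl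
  simp only [intervalIntegral.integral_of_le hab]
  exact sq_integral_mul_le (hf.mono_measure hle) (hg.mono_measure hle)

theorem ContinuousOn.memLp_restrict_Icc {E : Type*} [NormedAddCommGroup E] {f : ℝ → E} {a b : ℝ}
    (hf : ContinuousOn f (Icc a b)) (p : ENNReal) : MemLp f p (volume.restrict (Icc a b)) := by
  obtain ⟨C, hC⟩ := isCompact_Icc.exists_bound_of_continuousOn hf
  exact MemLp.of_bound (hf.aestronglyMeasurable measurableSet_Icc) C
    ((ae_restrict_iff' measurableSet_Icc).mpr (ae_of_all _ hC))

theorem le_mul_exp_of_le_add_mul_intervalIntegral {w : ℝ → ℝ} {T C ε : ℝ} (hC : 0 ≤ C)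
    (hw : ContinuousOn w (Icc 0 T))
    (hle : ∀ t ∈ Icc 0 T, w t ≤ ε + C * ∫ s in 0..t, w s) :
    ∀ t ∈ Icc 0 T, w t ≤ ε * exp (C * t) := by
  set v : ℝ → ℝ := fun t => ∫ s in 0..t, w s
  have hv : ∀ t ∈ Icc 0 T, HasDerivWithinAt v (w t) (Icc 0 T) t := fun t ht => by
    have := Fact.mk ht
    exact intervalIntegral.integral_hasDerivWithinAt_right
      ((hw.mono (Icc_subset_Icc_right ht.2)).intervalIntegrable_of_Icc ht.1)
      (hw.stronglyMeasurableAtFilter_nhdsWithin measurableSet_Icc t) (hw t ht)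
  have hv_le : ∀ t ∈ Icc 0 T, v t ≤ gronwallBound 0 C ε (t - 0) :=
    le_gronwallBound_of_liminf_deriv_right_le (fun t ht => (hv t ht).continuousWithinAt)
      (fun t ht _ hr => ((hv t (Ico_subset_Icc_self ht)).mono_of_mem_nhdsWithin
        (Icc_mem_nhdsGE_of_mem ht)).liminf_right_slope_le hr)
      (by simp [v]) (fun t ht => by linarith [hle t (Ico_subset_Icc_self ht)])
  intro t ht
  have hCv : C * v t ≤ ε * (exp (C * t) - 1) := by
    rcases hC.eq_or_lt with rfl | hC
    · simp
    · calc C * v t ≤ C * gronwallBound 0 C ε (t - 0) :=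
            mul_le_mul_of_nonneg_left (hv_le t ht) hC.le
        _ = ε * (exp (C * t) - 1) := by
          rw [gronwallBound_of_K_ne_0 hC.ne', sub_zero]; field_simp; ring
  linarith [hle t ht]

theorem LipschitzWith.sq_sub_le {L : NNReal} {f : ℝ → ℝ} (hf : LipschitzWith L f) (x y : ℝ) :
    (f x - f y) ^ 2 ≤ L ^ 2 * (x - y) ^ 2 := by
  rw [← sq_abs, ← sq_abs (x - y), ← mul_pow]
  have := hf.dist_le_mul x y
  rw [Real.dist_eq, Real.dist_eq] at this
  gcongr

theorem LipschitzWith.sq_intervalIntegral_comp_sub_mul_le {L : NNReal} {f y z ψ : ℝ → ℝ}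
    {a t : ℝ} (hf : LipschitzWith L f) (hat : a ≤ t) (hy : ContinuousOn y (Icc a t))
    (hz : ContinuousOn z (Icc a t)) (hψ : MemLp ψ 2 (volume.restrict (Icc a t))) :
    (∫ s in a..t, (f (y s) - f (z s)) * ψ s) ^ 2 ≤
      L ^ 2 * (∫ s in a..t, (y s - z s) ^ 2) * ∫ s in a..t, ψ s ^ 2 := by
  have hfyz : ContinuousOn (fun s => f (y s) - f (z s)) (Icc a t) :=
    (hf.continuous.comp_continuousOn hy).sub (hf.continuous.comp_continuousOn hz)
  have hlip : ∫ s in a..t, (f (y s) - f (z s)) ^ 2 ≤ L ^ 2 * ∫ s in a..t, (y s - z s) ^ 2 := by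
    rw [← intervalIntegral.integral_const_mul]
    exact intervalIntegral.integral_mono_on hat ((hfyz.pow 2).intervalIntegrable_of_Icc hat)
      (((hy.sub hz).pow 2).intervalIntegrable_of_Icc hat |>.const_mul _)
      fun s _ => hf.sq_sub_le _ _
  calc _ ≤ (∫ s in a..t, (f (y s) - f (z s)) ^ 2) * ∫ s in a..t, ψ s ^ 2 :=
        sq_intervalIntegral_mul_le hat (hfyz.memLp_restrict_Icc 2) hψ
    _ ≤ _ := mul_le_mul_of_nonneg_right hlip
        (intervalIntegral.integral_nonneg hat fun s _ => sq_nonneg _)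

theorem abs_sub_le_of_sub_eq_integral_add {T N δ : ℝ} {Lb Lσ : NNReal} {b σ y z ψ r : ℝ → ℝ}
    (hb : LipschitzWith Lb b) (hσ : LipschitzWith Lσ σ)
    (hy : ContinuousOn y (Icc 0 T)) (hz : ContinuousOn z (Icc 0 T))
    (hψ : MemLp ψ 2 (volume.restrict (Icc 0 T))) (hψN : ∫ s in 0..T, ψ s ^ 2 ≤ N)
    (hr : ∀ t ∈ Icc 0 T, |r t| ≤ δ)
    (hyz : ∀ t ∈ Icc 0 T, y t - z t = (∫ s in 0..t, (b (y s) - b (z s))) +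
      (∫ s in 0..t, (σ (y s) - σ (z s)) * ψ s) + r t) :
    ∀ t ∈ Icc 0 T, |y t - z t| ≤ √(3 * exp (3 * (T * Lb ^ 2 + N * Lσ ^ 2) * T)) * δ := by
  set C := 3 * (T * Lb ^ 2 + N * Lσ ^ 2)
  have key : ∀ t ∈ Icc 0 T, (y t - z t) ^ 2 ≤ 3 * δ ^ 2 + C * ∫ s in 0..t, (y s - z s) ^ 2 := by
    intro t ht
    have hsub : Icc 0 t ⊆ Icc 0 T := Icc_subset_Icc_right ht.2
    set V := ∫ s in 0..t, (y s - z s) ^ 2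
    have hV : 0 ≤ V := intervalIntegral.integral_nonneg ht.1 fun s _ => sq_nonneg _
    have hb_int : (∫ s in 0..t, (b (y s) - b (z s))) ^ 2 ≤ Lb ^ 2 * V * T := by
      have := hb.sq_intervalIntegral_comp_sub_mul_le ht.1 (hy.mono hsub) (hz.mono hsub)
        (memLp_const (1 : ℝ))
      simp only [mul_one, one_pow, intervalIntegral.integral_const, smul_eq_mul,
        sub_zero] at this
      exact this.trans (by gcongr; exact ht.2)
    have hψt : ∫ s in 0..t, ψ s ^ 2 ≤ N :=
      (intervalIntegral.integral_mono_interval le_rfl ht.1 ht.2 (ae_of_all _ fun s => sq_nonneg _)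
        ((intervalIntegrable_iff_integrableOn_Icc_of_le (ht.1.trans ht.2)).mpr
          hψ.integrable_sq)).trans hψN
    have hσ_int : (∫ s in 0..t, (σ (y s) - σ (z s)) * ψ s) ^ 2 ≤ Lσ ^ 2 * V * N :=
      (hσ.sq_intervalIntegral_comp_sub_mul_le ht.1 (hy.mono hsub) (hz.mono hsub)
        (hψ.mono_measure (Measure.restrict_mono hsub le_rfl))).trans (by gcongr)
    have hr_sq : r t ^ 2 ≤ δ ^ 2 := sq_le_sq' (abs_le.mp (hr t ht)).1 (abs_le.mp (hr t ht)).2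
    have hyz_t := hyz t ht
    set A := ∫ s in 0..t, (b (y s) - b (z s))
    set B := ∫ s in 0..t, (σ (y s) - σ (z s)) * ψ s
    rw [hyz_t]
    nlinarith [sq_nonneg (A - B), sq_nonneg (A - r t), sq_nonneg (B - r t)]
  intro t ht
  have hT : 0 ≤ T := ht.1.trans ht.2
  have hN : 0 ≤ N := (intervalIntegral.integral_nonneg hT fun s _ => sq_nonneg _).trans hψN
  have hδ : 0 ≤ δ := (abs_nonneg _).trans (hr t ht)
  have hw := le_mul_exp_of_le_add_mul_intervalIntegral (by positivity) ((hy.sub hz).pow 2) key t ht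
  calc |y t - z t| = √((y t - z t) ^ 2) := (sqrt_sq_eq_abs _).symm
    _ ≤ √(3 * exp (C * T) * δ ^ 2) := sqrt_le_sqrt (hw.trans (by
        rw [mul_right_comm]; gcongr; exact ht.2))
    _ = √(3 * exp (C * T)) * δ := by rw [sqrt_mul (by positivity), sqrt_sq hδ]

theorem tendstoUniformlyOn_of_tendsto_of_continuity_modulus {ι X α : Type*}
    [PseudoMetricSpace X] [PseudoMetricSpace α] {F : ι → X → α} {f : X → α} {K : Set X}
    {l : Filter ι} (hK : IsCompact K) (ω : ℝ → ℝ) (hω : Tendsto ω (𝓝 0) (𝓝 0))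
    (hF : ∀ i, ∀ x ∈ K, ∀ y ∈ K, dist (F i x) (F i y) ≤ ω (dist x y))
    (h : ∀ x ∈ K, Tendsto (fun i => F i x) l (𝓝 (f x))) : TendstoUniformlyOn F f l K := by
  have := isCompact_iff_compactSpace.mp hK
  have hFK : Equicontinuous fun i (x : K) => F i x :=
    Metric.equicontinuous_of_continuity_modulus ω hω _ fun x y i => hF i x x.2 y y.2
  rw [tendstoUniformlyOn_iff_tendstoUniformly_comp_coe]
  exact UniformFun.tendsto_iff_tendstoUniformly.mp
    ((hFK.tendsto_uniformFun_iff_pi l _).mpr (tendsto_pi_nhds.mpr fun x => h x x.2))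

theorem intervalIntegral_mul_indicator_Iic {f g : ℝ → ℝ} {a t b : ℝ} (hat : a ≤ t)
    (htb : t ≤ b) : ∫ s in a..b, f s * (Iic t).indicator g s = ∫ s in a..t, g s * f s := by
  simp_rw [intervalIntegral.integral_of_le (hat.trans htb), intervalIntegral.integral_of_le hat,
    ← indicator_mul_right, integral_indicator measurableSet_Iic,
    Measure.restrict_restrict measurableSet_Iic, Iic_inter_Ioc_of_le htb, mul_comm]

theorem ContinuousOn.intervalIntegrable_mul_of_memLp {h g : ℝ → ℝ} {a b t : ℝ}
    (hh : ContinuousOn h (Icc a b)) (hg : MemLp g 2 (volume.restrict (Icc a b)))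
    (ht : t ∈ Icc a b) : IntervalIntegrable (fun s => h s * g s) volume a t :=
  (intervalIntegrable_iff_integrableOn_Icc_of_le ht.1).mpr <|
    (IntegrableOn.continuousOn_mul hh (hg.integrable one_le_two) isCompact_Icc).mono_set
      (Icc_subset_Icc_right ht.2)

theorem sq_intervalIntegral_mul_sub_le {T N M : ℝ} {h ψ : ℝ → ℝ} (hh : ContinuousOn h (Icc 0 T))
    (hM : ∀ x ∈ Icc 0 T, |h x| ≤ M) (hψ : MemLp ψ 2 (volume.restrict (Icc 0 T)))
    (hψN : ∫ s in 0..T, ψ s ^ 2 ≤ N) {x y : ℝ} (hx : x ∈ Icc 0 T) (hy : y ∈ Icc 0 T)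
    (hyx : y ≤ x) :
    ((∫ s in 0..x, h s * ψ s) - ∫ s in 0..y, h s * ψ s) ^ 2 ≤ M ^ 2 * N * (x - y) := by
  have hsub : Icc y x ⊆ Icc 0 T := Icc_subset_Icc hy.1 hx.2
  have hh_sq : ∫ s in y..x, h s ^ 2 ≤ M ^ 2 * (x - y) := by
    rw [mul_comm, ← smul_eq_mul, ← intervalIntegral.integral_const]
    refine intervalIntegral.integral_mono_on hyx
      (((hh.mono hsub).pow 2).intervalIntegrable_of_Icc hyx) intervalIntegrable_const
      fun s hs => ?_
    rw [← sq_abs]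
    exact pow_le_pow_left₀ (abs_nonneg _) (hM s (hsub hs)) 2
  have hψ_sq : ∫ s in y..x, ψ s ^ 2 ≤ N :=
    (intervalIntegral.integral_mono_interval hy.1 hyx hx.2 (ae_of_all _ fun s => sq_nonneg _)
      ((intervalIntegrable_iff_integrableOn_Icc_of_le (hy.1.trans hy.2)).mpr
        hψ.integrable_sq)).trans hψN
  rw [intervalIntegral.integral_interval_sub_left (hh.intervalIntegrable_mul_of_memLp hψ hx)
    (hh.intervalIntegrable_mul_of_memLp hψ hy)]
  calc _ ≤ (∫ s in y..x, h s ^ 2) * ∫ s in y..x, ψ s ^ 2 :=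
        sq_intervalIntegral_mul_le hyx ((hh.mono hsub).memLp_restrict_Icc 2)
          (hψ.mono_measure (Measure.restrict_mono hsub le_rfl))
    _ ≤ M ^ 2 * (x - y) * N := mul_le_mul hh_sq hψ_sq
        (intervalIntegral.integral_nonneg hyx fun s _ => sq_nonneg _)
        (mul_nonneg (sq_nonneg _) (sub_nonneg.2 hyx))
    _ = M ^ 2 * N * (x - y) := by ring

theorem tendstoUniformlyOn_intervalIntegral_mul_of_weak {T N : ℝ} {h φ : ℝ → ℝ}
    {φn : ℕ → ℝ → ℝ} (hh : ContinuousOn h (Icc 0 T))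
    (hφn : ∀ n, MemLp (φn n) 2 (volume.restrict (Icc 0 T)))
    (hbound : ∀ n, ∫ s in 0..T, φn n s ^ 2 ≤ N)
    (hweak : ∀ g : ℝ → ℝ, MemLp g 2 (volume.restrict (Icc 0 T)) →
      Tendsto (fun n => ∫ s in 0..T, φn n s * g s) atTop (𝓝 (∫ s in 0..T, φ s * g s))) :
    TendstoUniformlyOn (fun n t => ∫ s in 0..t, h s * φn n s) (fun t => ∫ s in 0..t, h s * φ s)
      atTop (Icc 0 T) := by
  obtain ⟨M, hM⟩ := isCompact_Icc.exists_bound_of_continuousOn hh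
  refine tendstoUniformlyOn_of_tendsto_of_continuity_modulus isCompact_Icc
    (fun r => √(M ^ 2 * N * r)) ?_ (fun n x hx y hy => ?_) (fun t ht => ?_)
  · simpa using ((continuous_const.mul continuous_id).sqrt.tendsto (0 : ℝ))
  · rw [Real.dist_eq, Real.dist_eq]
    rcases le_total y x with hyx | hxy
    · exact abs_le_sqrt (by simpa [abs_of_nonneg (sub_nonneg.2 hyx)] using
        sq_intervalIntegral_mul_sub_le hh hM (hφn n) (hbound n) hx hy hyx)
    · rw [abs_sub_comm, abs_sub_comm x]
      exact abs_le_sqrt (by simpa [abs_of_nonneg (sub_nonneg.2 hxy)] using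
        sq_intervalIntegral_mul_sub_le hh hM (hφn n) (hbound n) hy hx hxy)
  · have := hweak _ ((hh.memLp_restrict_Icc 2).indicator measurableSet_Iic (s := Iic t))
    simpa only [intervalIntegral_mul_indicator_Iic ht.1 ht.2] using this

theorem sub_eq_integral_add_of_skeleton {T ξ : ℝ} {b σ K₀ y z ψ₁ ψ₂ : ℝ → ℝ}
    (hb : Continuous b) (hσ : Continuous σ) (hyc : ContinuousOn y (Icc 0 T))
    (hzc : ContinuousOn z (Icc 0 T)) (hψ₁ : MemLp ψ₁ 2 (volume.restrict (Icc 0 T)))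
    (hy : ∀ t ∈ Icc 0 T,
      y t = ξ + (∫ s in 0..t, b (y s)) + (∫ s in 0..t, σ (y s) * ψ₁ s) + K₀ t)
    (hz : ∀ t ∈ Icc 0 T,
      z t = ξ + (∫ s in 0..t, b (z s)) + (∫ s in 0..t, σ (z s) * ψ₂ s) + K₀ t) :
    ∀ t ∈ Icc 0 T, y t - z t = (∫ s in 0..t, (b (y s) - b (z s))) +
      (∫ s in 0..t, (σ (y s) - σ (z s)) * ψ₁ s) +
      ((∫ s in 0..t, σ (z s) * ψ₁ s) - ∫ s in 0..t, σ (z s) * ψ₂ s) := by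
  intro t ht
  have hint : ∀ {u : ℝ → ℝ}, ContinuousOn u (Icc 0 T) →
      IntervalIntegrable u volume 0 t := fun hu =>
    (hu.mono (Icc_subset_Icc_right ht.2)).intervalIntegrable_of_Icc ht.1
  have hσψ : ∀ {u : ℝ → ℝ}, ContinuousOn u (Icc 0 T) →
      IntervalIntegrable (fun s => σ (u s) * ψ₁ s) volume 0 t := fun hu =>
    (hσ.comp_continuousOn hu).intervalIntegrable_mul_of_memLp hψ₁ ht
  have hσ_sub : ∫ s in 0..t, (σ (y s) - σ (z s)) * ψ₁ s =
      (∫ s in 0..t, σ (y s) * ψ₁ s) - ∫ s in 0..t, σ (z s) * ψ₁ s := by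
    simp_rw [sub_mul]
    exact intervalIntegral.integral_sub (hσψ hyc) (hσψ hzc)
  have hb_sub : ∫ s in 0..t, (b (y s) - b (z s)) =
      (∫ s in 0..t, b (y s)) - ∫ s in 0..t, b (z s) :=
    intervalIntegral.integral_sub (hint (hb.comp_continuousOn hyc))
      (hint (hb.comp_continuousOn hzc))
  rw [hy t ht, hz t ht, hσ_sub, hb_sub]
  ring

theorem tendsto_sSup_abs_sub_of_tendstoUniformlyOn {ι X : Type*} {F : ι → X → ℝ} {f : X → ℝ}
    {l : Filter ι} {s : Set X} (h : TendstoUniformlyOn F f l s) :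
    Tendsto (fun i => sSup ((fun x => |F i x - f x|) '' s)) l (𝓝 0) := by
  rw [Metric.tendsto_nhds]
  intro ε hε
  filter_upwards [Metric.tendstoUniformlyOn_iff.mp h (ε / 2) (half_pos hε)] with i hi
  have hsup : sSup ((fun x => |F i x - f x|) '' s) ≤ ε / 2 :=
    Real.sSup_le (by
      rintro _ ⟨x, hx, rfl⟩
      exact (abs_sub_comm _ _).trans_le (hi x hx).le) (half_pos hε).le
  have hnonneg : 0 ≤ sSup ((fun x => |F i x - f x|) '' s) :=
    Real.sSup_nonneg (by rintro _ ⟨x, -, rfl⟩; exact abs_nonneg _)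
  rw [Real.dist_0_eq_abs, abs_of_nonneg hnonneg]
  linarith

theorem stmt7_general
    (T : ℝ) (ξ : ℝ) (N : ℝ)
    (b σ : ℝ → ℝ) (Lb Lσ : NNReal)
    (hb : LipschitzWith Lb b) (hσ : LipschitzWith Lσ σ)
    (K₀ : ℝ → ℝ)
    (φn : ℕ → ℝ → ℝ) (φ : ℝ → ℝ)
    (hφn : ∀ n, MemLp (φn n) 2 (volume.restrict (Icc (0:ℝ) T)))
    (hbound : ∀ n, (∫ s in (0:ℝ)..T, (φn n s) ^ 2) ≤ N)
    (hweak : ∀ g : ℝ → ℝ, MemLp g 2 (volume.restrict (Icc (0:ℝ) T)) →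
      Tendsto (fun n => ∫ s in (0:ℝ)..T, φn n s * g s) atTop
        (nhds (∫ s in (0:ℝ)..T, φ s * g s)))
    (Yn : ℕ → ℝ → ℝ) (Y : ℝ → ℝ)
    (hYnc : ∀ n, ContinuousOn (Yn n) (Icc 0 T))
    (hYn : ∀ n, ∀ t ∈ Icc (0:ℝ) T,
      Yn n t = ξ + (∫ s in (0:ℝ)..t, b (Yn n s)) + (∫ s in (0:ℝ)..t, σ (Yn n s) * φn n s) + K₀ t)
    (hYc : ContinuousOn Y (Icc 0 T))
    (hY : ∀ t ∈ Icc (0:ℝ) T,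
      Y t = ξ + (∫ s in (0:ℝ)..t, b (Y s)) + (∫ s in (0:ℝ)..t, σ (Y s) * φ s) + K₀ t) :
    Tendsto (fun n => sSup ((fun t => |Yn n t - Y t|) '' Icc (0:ℝ) T)) atTop (nhds 0) := by
  set D := √(3 * exp (3 * (T * Lb ^ 2 + N * Lσ ^ 2) * T))
  have hforcing := Metric.tendstoUniformlyOn_iff.mp <|
    tendstoUniformlyOn_intervalIntegral_mul_of_weak (hσ.continuous.comp_continuousOn hYc)
      hφn hbound hweak
  refine tendsto_sSup_abs_sub_of_tendstoUniformlyOn (Metric.tendstoUniformlyOn_iff.mpr ?_)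
  intro ε hε
  filter_upwards [hforcing (ε / (D + 1)) (by positivity)] with n hn
  have hYn_sub := abs_sub_le_of_sub_eq_integral_add hb hσ (hYnc n) hYc (hφn n) (hbound n)
    (fun t ht => by rw [abs_sub_comm]; exact (hn t ht).le)
    (sub_eq_integral_add_of_skeleton hb.continuous hσ.continuous (hYnc n) hYc (hφn n) (hYn n) hY)
  intro t ht
  rw [Real.dist_eq, abs_sub_comm]
  calc |Yn n t - Y t| ≤ D * (ε / (D + 1)) := hYn_sub t ht
    _ < ε := by rw [mul_div_assoc']; exact (div_lt_iff₀ (by positivity)).mpr (by nlinarith)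

theorem stmt7
    (T : ℝ) (hT : 0 < T) (ξ : ℝ) (N : ℝ) (hN : 0 < N)
    (b σ : ℝ → ℝ) (Lb Lσ : NNReal)
    (hb : LipschitzWith Lb b) (hσ : LipschitzWith Lσ σ)
    (K₀ : ℝ → ℝ) (hK₀c : ContinuousOn K₀ (Icc 0 T))
    (hK₀m : MonotoneOn K₀ (Icc 0 T)) (hK₀0 : K₀ 0 = 0)
    (φn : ℕ → ℝ → ℝ) (φ : ℝ → ℝ)
    (hφn : ∀ n, MemLp (φn n) 2 (volume.restrict (Icc (0:ℝ) T)))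
    (hφ : MemLp φ 2 (volume.restrict (Icc (0:ℝ) T)))
    (hbound : ∀ n, (∫ s in (0:ℝ)..T, (φn n s) ^ 2) ≤ N)
    (hweak : ∀ g : ℝ → ℝ, MemLp g 2 (volume.restrict (Icc (0:ℝ) T)) →
      Tendsto (fun n => ∫ s in (0:ℝ)..T, φn n s * g s) atTop
        (nhds (∫ s in (0:ℝ)..T, φ s * g s)))
    (Yn : ℕ → ℝ → ℝ) (Y : ℝ → ℝ)
    (hYnc : ∀ n, ContinuousOn (Yn n) (Icc 0 T))
    (hYn : ∀ n, ∀ t ∈ Icc (0:ℝ) T,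
      Yn n t = ξ + (∫ s in (0:ℝ)..t, b (Yn n s)) + (∫ s in (0:ℝ)..t, σ (Yn n s) * φn n s) + K₀ t)
    (hYc : ContinuousOn Y (Icc 0 T))
    (hY : ∀ t ∈ Icc (0:ℝ) T,
      Y t = ξ + (∫ s in (0:ℝ)..t, b (Y s)) + (∫ s in (0:ℝ)..t, σ (Y s) * φ s) + K₀ t) :
    Tendsto (fun n => sSup ((fun t => |Yn n t - Y t|) '' Icc (0:ℝ) T)) atTop (nhds 0) :=
  stmt7_general T ξ N b σ Lb Lσ hb hσ K₀ φn φ hφn hbound hweak Yn Y hYnc hYn hYc hY
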